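/- Let X be a Banach C(K)-module and x ∈ X such that the dual Banach lattice X(x)' of the cyclic subspace X(x) has no atoms for every x ∈ X. Then K has no isolated points, and moreover the hyperstonean space Q with C(Q) = Z(X') has no isolated points: if q were an isolated point of Q, the functional z ∈ X' supported at {q}, restricted to a suitable cyclic subspace X(x), would be an atom of X(x)'. -/

import Mathlib

/-!
An isolated point `p` of `K` gives the idempotent `1_{p} ∈ C(K)`; a nonzero vector `x` in the
range of `1_{p}` satisfies `f • x = f p • x`, so a functional with `u x = 1` restricts on `X(x)`
to evaluation at `p`. Likewise an isolated point `q` of `Q` gives a nonzero `z = 1_{q} • u ∈ X'`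
on which `C(K)` acts by the scalars `F q`, so `z`, suitably normalised on a cyclic subspace
`X(x)`, is a character `τ` of `C(K)`. Such a functional is an atom of `X(x)'`: a positive `μ ≤ τ` has
`μ (g⋆ g) ≤ τ (g⋆ g) = 0` for `g ∈ ker τ`, so `μ` vanishes on `ker τ` by Cauchy–Schwarz, i.e.
`μ = μ 1 • τ`.
-/

noncomputable section

variable {K : Type*} [TopologicalSpace K] [CompactSpace K] [T2Space K]
variable {X : Type*} [NormedAddCommGroup X] [NormedSpace ℂ X] [CompleteSpace X]

/-- `u` is a positive functional on the cyclic subspace `X(x)` of the Banach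
C(K)-module `X`: it is nonnegative real on the positive cone `{fx : f ≥ 0}`. -/
def PosOn (m : C(K, ℂ) →ₐ[ℂ] (X →L[ℂ] X)) (x : X) (u : X →L[ℂ] ℂ) : Prop :=
  ∀ f : C(K, ℂ), (∀ k : K, 0 ≤ (f k).re ∧ (f k).im = 0) →
    0 ≤ (u (m f x)).re ∧ (u (m f x)).im = 0

/-- `u` is an atom of the dual Banach lattice `X(x)'`: `u` is positive and nonzero on
`X(x)`, and every positive functional `v` with `v ≤ u` on `X(x)` is a real multiple
of `u` there. -/
def IsAtomOn (m : C(K, ℂ) →ₐ[ℂ] (X →L[ℂ] X)) (x : X) (u : X →L[ℂ] ℂ) : Prop :=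
  PosOn m x u ∧ (∃ f : C(K, ℂ), u (m f x) ≠ 0) ∧
    ∀ v : X →L[ℂ] ℂ, PosOn m x v → PosOn m x (u - v) →
      ∃ a : ℝ, ∀ f : C(K, ℂ), v (m f x) = (a : ℂ) * u (m f x)

open scoped ComplexOrder

lemma AlgHom.map_nonneg {A : Type*} [Ring A] [Algebra ℂ A]
    [PartialOrder A] [NonnegSpectrumClass ℂ A] (τ : A →ₐ[ℂ] ℂ) {a : A} (ha : 0 ≤ a) :
    0 ≤ τ a :=
  spectrum_nonneg_of_nonneg ha (AlgHom.apply_mem_spectrum τ a)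

namespace PositiveLinearMap

variable {A : Type*} [CStarAlgebra A] [PartialOrder A] [StarOrderedRing A]

/-- Cauchy–Schwarz in the GNS space of `μ`. -/
lemma apply_star_mul_eq_zero_of_apply_star_mul_self_eq_zero (μ : A →ₚ[ℂ] ℂ) {g : A}
    (hg : μ (star g * g) = 0) (a : A) : μ (star a * g) = 0 := by
  have hnorm : ‖μ.toPreGNS g‖ = 0 := by
    have := μ.preGNS_norm_sq (μ.toPreGNS g)
    rw [μ.ofPreGNS_toPreGNS, hg] at this
    exact_mod_cast pow_eq_zero_iff two_ne_zero |>.mp this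
  have := norm_inner_le_norm (𝕜 := ℂ) (μ.toPreGNS a) (μ.toPreGNS g)
  rwa [hnorm, mul_zero, norm_le_zero_iff] at this

lemma apply_eq_mul_of_le_algHom (μ : A →ₚ[ℂ] ℂ) (τ : A →ₐ[ℂ] ℂ)
    (hμτ : ∀ a, 0 ≤ a → μ a ≤ τ a) (a : A) : μ a = μ 1 * τ a := by
  set g := a - algebraMap ℂ A (τ a)
  have hτg : τ g = 0 := by simp [g]
  have hμgg : μ (star g * g) = 0 := by
    refine le_antisymm ?_ (μ.map_nonneg (star_mul_self_nonneg g))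
    simpa [hτg] using hμτ _ (star_mul_self_nonneg g)
  have hμg : μ g = 0 := by
    simpa using μ.apply_star_mul_eq_zero_of_apply_star_mul_self_eq_zero hμgg 1
  calc μ a = μ (g + τ a • 1) := by simp [g, Algebra.algebraMap_eq_smul_one]
    _ = μ 1 * τ a := by rw [map_add, map_smul, hμg, zero_add, smul_eq_mul, mul_comm]

end PositiveLinearMap

section CyclicSubspace

variable {Y : Type*} [TopologicalSpace Y] {E : Type*} [NormedAddCommGroup E] [NormedSpace ℂ E]

lemma posOn_iff (m : C(Y, ℂ) →ₐ[ℂ] (E →L[ℂ] E)) (x : E) (u : E →L[ℂ] ℂ) :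
    PosOn m x u ↔ ∀ f : C(Y, ℂ), 0 ≤ f → 0 ≤ u (m f x) := by
  simp only [PosOn, ContinuousMap.le_def, ContinuousMap.zero_apply, Complex.nonneg_iff,
    eq_comm (a := (0 : ℝ))]

lemma isAtomOn_of_apply_eq_algHom [CompactSpace Y] [T2Space Y]
    (m : C(Y, ℂ) →ₐ[ℂ] (E →L[ℂ] E)) (x : E) (u : E →L[ℂ] ℂ) (τ : C(Y, ℂ) →ₐ[ℂ] ℂ)
    (hu : ∀ f, u (m f x) = τ f) : IsAtomOn m x u := by
  refine ⟨(posOn_iff m x u).2 fun f hf ↦ hu f ▸ τ.map_nonneg hf,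
    ⟨1, by rw [hu, map_one]; exact one_ne_zero⟩, fun v hv hvu ↦ ?_⟩
  let μ : C(Y, ℂ) →ₚ[ℂ] ℂ := .mk₀ ((v ∘L ContinuousLinearMap.apply ℂ E x).toLinearMap ∘ₗ
    m.toLinearMap) ((posOn_iff m x v).1 hv)
  have hμ : ∀ f, μ f = v (m f x) := fun f ↦ rfl
  have hμτ : ∀ f, 0 ≤ f → μ f ≤ τ f := fun f hf ↦ by
    simpa [hμ, ← hu] using (posOn_iff m x (u - v)).1 hvu f hf
  have hμ1 : ((0 : ℝ) : ℂ) ≤ μ 1 := by simpa using μ.map_nonneg zero_le_one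
  refine ⟨(μ 1).re, fun f ↦ ?_⟩
  rw [hu, ← Complex.eq_re_of_ofReal_le hμ1, ← hμ]
  exact μ.apply_eq_mul_of_le_algHom τ hμτ f

end CyclicSubspace

lemma ContinuousMap.exists_mul_eq_smul_of_isOpen_singleton {Y : Type*} [TopologicalSpace Y]
    [T1Space Y] {p : Y} (hp : IsOpen ({p} : Set Y)) :
    ∃ e : C(Y, ℂ), e ≠ 0 ∧ ∀ F : C(Y, ℂ), F * e = F p • e := by
  refine ⟨⟨Set.indicator {p} 1, IsClopen.continuous_indicator ⟨isClosed_singleton, hp⟩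
    continuous_const⟩, fun he ↦ ?_, fun F ↦ ?_⟩
  · simpa using DFunLike.congr_fun he p
  · ext y
    by_cases hy : y = p <;> simp [hy]

lemma exists_ne_zero_apply_eq_smul_of_isOpen_singleton {Y : Type*} [TopologicalSpace Y]
    [T1Space Y] {E : Type*} [NormedAddCommGroup E] [NormedSpace ℂ E]
    (φ : C(Y, ℂ) →ₐ[ℂ] (E →L[ℂ] E)) (hφ : Function.Injective φ) {p : Y}
    (hp : IsOpen ({p} : Set Y)) : ∃ w : E, w ≠ 0 ∧ ∀ F : C(Y, ℂ), φ F w = F p • w := by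
  obtain ⟨e, he, hmul⟩ := ContinuousMap.exists_mul_eq_smul_of_isOpen_singleton hp
  obtain ⟨w₀, hw₀⟩ : ∃ w₀, φ e w₀ ≠ 0 := by
    by_contra! h
    exact he (hφ (by ext w; simp [h w]))
  refine ⟨φ e w₀, hw₀, fun F ↦ ?_⟩
  calc φ F (φ e w₀) = φ (F * e) w₀ := by rw [map_mul]; rfl
    _ = F p • φ e w₀ := by rw [hmul, map_smul]; rfl

lemma exists_algHom_of_forall_exists_apply_eq_mul {A : Type*} [Ring A] [Algebra ℂ A]
    {E : Type*} [NormedAddCommGroup E] [NormedSpace ℂ E] (m : A →ₐ[ℂ] (E →L[ℂ] E))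
    (z : E →L[ℂ] ℂ) (hz : z ≠ 0) (hmz : ∀ f, ∃ c : ℂ, ∀ w, z (m f w) = c * z w) :
    ∃ (x : E) (τ : A →ₐ[ℂ] ℂ), ∀ f, z (m f x) = τ f := by
  obtain ⟨y, hy⟩ := DFunLike.ne_iff.1 hz
  set x := (z y)⁻¹ • y
  have hzx : z x = 1 := by simpa [x] using inv_mul_cancel₀ hy
  have hmzx : ∀ f w, z (m f w) = z (m f x) * z w := fun f w ↦ by
    obtain ⟨c, hc⟩ := hmz f
    rw [hc, hc, hzx, mul_one]
  let τ : A →ₐ[ℂ] ℂ := .ofLinearMap ((z ∘L ContinuousLinearMap.apply ℂ E x).toLinearMap ∘ₗ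
    m.toLinearMap) (by simpa using hzx) fun f g ↦ by simpa using hmzx f (m g x)
  exact ⟨x, τ, fun f ↦ rfl⟩

section IsolatedPoints

variable {Y : Type*} [TopologicalSpace Y] [CompactSpace Y] [T2Space Y]
  {E : Type*} [NormedAddCommGroup E] [NormedSpace ℂ E]

lemma not_isOpen_singleton_of_forall_not_isAtomOn (m : C(Y, ℂ) →ₐ[ℂ] (E →L[ℂ] E))
    (hm : Function.Injective m) (hNoAtom : ∀ x : E, ¬ ∃ u : E →L[ℂ] ℂ, IsAtomOn m x u)
    (p : Y) : ¬ IsOpen ({p} : Set Y) := by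
  intro hp
  obtain ⟨x, hx, hmx⟩ := exists_ne_zero_apply_eq_smul_of_isOpen_singleton m hm hp
  obtain ⟨u, hux⟩ := SeparatingDual.exists_eq_one (R := ℂ) hx
  refine hNoAtom x ⟨u, isAtomOn_of_apply_eq_algHom m x u (ContinuousMap.evalAlgHom ℂ ℂ p)
    fun f ↦ ?_⟩
  simp [hmx, hux]

lemma not_isOpen_singleton_dual_of_forall_not_isAtomOn (m : C(Y, ℂ) →ₐ[ℂ] (E →L[ℂ] E))
    {Q : Type*} [TopologicalSpace Q] [T1Space Q]
    (m' : C(Q, ℂ) →ₐ[ℂ] ((E →L[ℂ] ℂ) →L[ℂ] (E →L[ℂ] ℂ))) (hm' : Function.Injective m')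
    (hcompat : ∀ f : C(Y, ℂ), ∃ F : C(Q, ℂ),
      ∀ (u : E →L[ℂ] ℂ) (z : E), (m' F u) z = u (m f z))
    (hNoAtom : ∀ x : E, ¬ ∃ u : E →L[ℂ] ℂ, IsAtomOn m x u) (q : Q) :
    ¬ IsOpen ({q} : Set Q) := by
  intro hq
  obtain ⟨z, hz, hm'z⟩ := exists_ne_zero_apply_eq_smul_of_isOpen_singleton m' hm' hq
  have hmz : ∀ f, ∃ c : ℂ, ∀ w, z (m f w) = c * z w := fun f ↦ by
    obtain ⟨F, hF⟩ := hcompat f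
    exact ⟨F q, fun w ↦ by rw [← hF, hm'z]; rfl⟩
  obtain ⟨x, τ, hτ⟩ := exists_algHom_of_forall_exists_apply_eq_mul m z hz hmz
  exact hNoAtom x ⟨z, isAtomOn_of_apply_eq_algHom m x z τ hτ⟩

end IsolatedPoints

theorem stmt18_general
    (m : C(K, ℂ) →ₐ[ℂ] (X →L[ℂ] X)) (hm : Isometry m)
    {Q : Type*} [TopologicalSpace Q] [CompactSpace Q] [T2Space Q]
    (m' : C(Q, ℂ) →ₐ[ℂ] ((X →L[ℂ] ℂ) →L[ℂ] (X →L[ℂ] ℂ))) (hm' : Isometry m')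
    (hcompat : ∀ f : C(K, ℂ), ∃ F : C(Q, ℂ),
        ∀ (u : X →L[ℂ] ℂ) (z : X), (m' F u) z = u (m f z))
    (hNoAtom : ∀ x : X, ¬ ∃ u : X →L[ℂ] ℂ, IsAtomOn m x u) :
    (∀ k : K, ¬ IsOpen ({k} : Set K)) ∧ (∀ q : Q, ¬ IsOpen ({q} : Set Q)) :=
  ⟨not_isOpen_singleton_of_forall_not_isAtomOn m hm.injective hNoAtom,
    not_isOpen_singleton_dual_of_forall_not_isAtomOn m m' hm'.injective hcompat hNoAtom⟩

/-- If the dual of every cyclic subspace of a Kaplansky C(K)-module X has no atoms,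
then K has no isolated points, and the hyperstonean compact Q with C(Q) = Z(X')
has no isolated points. -/
theorem stmt18
    (m : C(K, ℂ) →ₐ[ℂ] (X →L[ℂ] X)) (hm : Isometry m)
    (hKap : ∀ x : X, ∃ U : Set K, IsClopen U ∧
        ∀ f : C(K, ℂ), (m f x = 0 ↔ ∀ k ∈ U, f k = 0))
    {Q : Type*} [TopologicalSpace Q] [CompactSpace Q] [T2Space Q]
    [ExtremallyDisconnected Q]
    (m' : C(Q, ℂ) →ₐ[ℂ] ((X →L[ℂ] ℂ) →L[ℂ] (X →L[ℂ] ℂ))) (hm' : Isometry m')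
    (hcompat : ∀ f : C(K, ℂ), ∃ F : C(Q, ℂ),
        ∀ (u : X →L[ℂ] ℂ) (z : X), (m' F u) z = u (m f z))
    (hKap' : ∀ u : X →L[ℂ] ℂ, ∃ U : Set Q, IsClopen U ∧
        ∀ F : C(Q, ℂ), (m' F u = 0 ↔ ∀ q ∈ U, F q = 0))
    (hNoAtom : ∀ x : X, ¬ ∃ u : X →L[ℂ] ℂ, IsAtomOn m x u) :
    (∀ k : K, ¬ IsOpen ({k} : Set K)) ∧ (∀ q : Q, ¬ IsOpen ({q} : Set Q)) :=
  stmt18_general m hm m' hm' hcompat hNoAtom
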